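/- Let α be irrational with convergents p_n/q_n and z_n = q_nα − p_n, let n be even, and on ℝ/ℤ set I_n = [0, |z_n| + |z_{n+1}|) and I_n^0 = [0, |z_{n+1}|). For x ∈ I_n define the first forward return time r_n^+(x) = min{j ∈ ℤ₊ : x + jα (mod 1) ∈ I_n}. Then r_n^+(x) = q_n if x ∈ I_n^0, and r_n^+(x) = q_{n+1} if x ∈ I_n \ I_n^0. -/

import Mathlib

/-- Gauss map iterates of `α`: `x₀ = {α}`, `x_{n+1} = {1/x_n}`. -/
noncomputable def gaussIter (α : ℝ) : ℕ → ℝ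
  | 0 => Int.fract α
  | n + 1 => Int.fract (gaussIter α n)⁻¹

/-- `cfa α n` is the partial quotient `a_{n+1} = ⌊1/x_n⌋` of the continued fraction of `α`. -/
noncomputable def cfa (α : ℝ) (n : ℕ) : ℕ := ⌊(gaussIter α n)⁻¹⌋₊

/-- Denominators `q_n` of the continued fraction convergents of `α`:
`q₀ = 1`, `q₁ = a₁`, `q_{n+2} = a_{n+2} q_{n+1} + q_n`. -/
noncomputable def cfq (α : ℝ) : ℕ → ℕ
  | 0 => 1
  | 1 => cfa α 0
  | n + 2 => cfa α (n + 1) * cfq α (n + 1) + cfq α n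

/-- Numerators `p_n` of the continued fraction convergents of `α`:
`p₀ = ⌊α⌋`, `p₁ = a₁⌊α⌋ + 1`, `p_{n+2} = a_{n+2} p_{n+1} + p_n`. -/
noncomputable def cfp (α : ℝ) : ℕ → ℤ
  | 0 => ⌊α⌋
  | 1 => cfa α 0 * ⌊α⌋ + 1
  | n + 2 => cfa α (n + 1) * cfp α (n + 1) + cfp α n

/-- `z_n = q_n α - p_n`. -/
noncomputable def cfz (α : ℝ) (n : ℕ) : ℝ := (cfq α n : ℝ) * α - (cfp α n : ℝ)

/-- The arc `[c, d) (mod 1)` on the circle `ℝ/ℤ`. -/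
noncomputable def arc (c d : ℝ) : Set (AddCircle (1 : ℝ)) :=
  (fun t : ℝ => (t : AddCircle (1 : ℝ))) '' Set.Ico c d

theorem eq_of_abs_mul_sub_lt_of_unimodular {q q' j : ℕ} {p p' k : ℤ} {α : ℝ}
    (hdet : (p' * q - p * q') ^ 2 = 1) (hsign : (q * α - p) * (q' * α - p') < 0)
    (hlt : |q' * α - p'| < |q * α - p|) (hj₀ : 0 < j) (hj : j < q')
    (hk : |j * α - k| < |q * α - p| + |q' * α - p'|) : j = q ∧ k = p := by
  set z := (q : ℝ) * α - p
  set z' := (q' : ℝ) * α - p'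
  set ε := p' * q - p * q'
  -- coordinates of `(j, k)` in the basis `(q, p), (q', p')`
  obtain ⟨u, v, hju, hku⟩ : ∃ u v : ℤ, u * q + v * q' = j ∧ u * p + v * p' = k :=
    ⟨ε * (p' * j - q' * k), ε * (q * k - p * j), by linear_combination (j : ℤ) * hdet,
      by linear_combination k * hdet⟩
  have hzu : j * α - k = u * z + v * z' := by
    have hj' : ((u * q + v * q' : ℤ) : ℝ) = j := by exact_mod_cast hju
    have hk' : ((u * p + v * p' : ℤ) : ℝ) = k := by exact_mod_cast hku
    push_cast at hj' hk'
    linear_combination (-α) * hj' + hk'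
  have hq : (0 : ℤ) ≤ q := Int.natCast_nonneg q
  have hj₀' : (0 : ℤ) < j := by exact_mod_cast hj₀
  have hj' : (j : ℤ) < q' := by exact_mod_cast hj
  rcases eq_or_ne v 0 with rfl | hv
  · have hu : 0 < u := by nlinarith
    obtain rfl : u = 1 := by
      by_contra hne
      have hu2 : (2 : ℝ) ≤ u := by exact_mod_cast (show (2 : ℤ) ≤ u by omega)
      rw [hzu, Int.cast_zero, zero_mul, add_zero, abs_mul,
        abs_of_pos (by exact_mod_cast hu)] at hk
      nlinarith [abs_nonneg z]
    constructor
    · have : (j : ℤ) = q := by linarith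
      exact_mod_cast this
    · exact hku.symm.trans (by ring)
  · have huv : u * v < 0 := by
      rcases lt_or_gt_of_ne hv with hv | hv
      · have : 0 < u := by by_contra! hu; nlinarith
        nlinarith
      · have : u < 0 := by by_contra! hu; nlinarith
        nlinarith
    -- `u z` and `v z'` have the same sign, so their absolute values add up
    have hsame : 0 < (u * z) * (v * z') := by
      have : ((u * v : ℤ) : ℝ) < 0 := by exact_mod_cast huv
      push_cast at this
      nlinarith
    have hadd : |u * z + v * z'| = |u * z| + |v * z'| := by
      rw [abs_add_eq_add_abs_iff]
      rcases le_or_gt 0 (u * z) with h | h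
      · exact Or.inl ⟨h, by nlinarith⟩
      · exact Or.inr ⟨h.le, by nlinarith⟩
    have hu1 : (1 : ℝ) ≤ |(u : ℝ)| := by
      exact_mod_cast Int.one_le_abs (left_ne_zero_of_mul huv.ne)
    have hv1 : (1 : ℝ) ≤ |(v : ℝ)| := by exact_mod_cast Int.one_le_abs hv
    rw [hzu, hadd, abs_mul, abs_mul] at hk
    nlinarith [abs_nonneg z, abs_nonneg z']

section ContinuedFraction

variable {α : ℝ}

theorem gaussIter_irrational (hα : Irrational α) : ∀ n, Irrational (gaussIter α n)
  | 0 => hα.sub_intCast ⌊α⌋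
  | n + 1 => (gaussIter_irrational hα n).inv.sub_intCast _

theorem gaussIter_nonneg : ∀ n, 0 ≤ gaussIter α n
  | 0 => Int.fract_nonneg _
  | _ + 1 => Int.fract_nonneg _

theorem gaussIter_lt_one : ∀ n, gaussIter α n < 1
  | 0 => Int.fract_lt_one _
  | _ + 1 => Int.fract_lt_one _

theorem gaussIter_pos (hα : Irrational α) (n : ℕ) : 0 < gaussIter α n :=
  (gaussIter_nonneg n).lt_of_ne fun h ↦ (gaussIter_irrational hα n).ne_zero h.symm

theorem cfa_eq_inv_sub (n : ℕ) : (cfa α n : ℝ) = (gaussIter α n)⁻¹ - gaussIter α (n + 1) := by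
  rw [cfa, natCast_floor_eq_intCast_floor (inv_nonneg.2 (gaussIter_nonneg n)), gaussIter,
    Int.fract, sub_sub_cancel]

theorem one_le_cfa (hα : Irrational α) (n : ℕ) : 1 ≤ cfa α n :=
  Nat.le_floor <| by
    rw [Nat.cast_one]
    exact (one_le_inv₀ (gaussIter_pos hα n)).2 (gaussIter_lt_one n).le

theorem cfq_pos (hα : Irrational α) : ∀ n, 0 < cfq α n
  | 0 => one_pos
  | 1 => one_le_cfa hα 0
  | n + 2 => Nat.add_pos_right _ (cfq_pos hα n)

theorem cfq_le_cfq_succ (hα : Irrational α) : ∀ n, cfq α n ≤ cfq α (n + 1)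
  | 0 => one_le_cfa hα 0
  | n + 1 => (Nat.le_mul_of_pos_left _ (one_le_cfa hα (n + 1))).trans (Nat.le_add_right _ _)

theorem cfp_mul_cfq_sub : ∀ n : ℕ,
    cfp α (n + 1) * cfq α n - cfp α n * cfq α (n + 1) = (-1) ^ n
  | 0 => by
      simp only [cfp, cfq]
      push_cast
      ring
  | n + 1 => by
      have ih := cfp_mul_cfq_sub n
      simp only [cfp, cfq] at ih ⊢
      push_cast
      linear_combination -ih

theorem cfz_zero : cfz α 0 = gaussIter α 0 := by
  simp only [cfz, cfq, cfp, gaussIter, Int.fract, Nat.cast_one, one_mul]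

theorem cfz_add_two (n : ℕ) : cfz α (n + 2) = cfa α (n + 1) * cfz α (n + 1) + cfz α n := by
  simp only [cfz, cfq, cfp]
  push_cast
  ring

theorem cfz_succ (hα : Irrational α) : ∀ n, cfz α (n + 1) = -gaussIter α (n + 1) * cfz α n
  | 0 => by
      have h₀ := (gaussIter_pos hα 0).ne'
      have hx₁ : gaussIter α 1 = (gaussIter α 0)⁻¹ - cfa α 0 := by
        linarith [cfa_eq_inv_sub (α := α) 0]
      have hx₀ : gaussIter α 0 = α - ⌊α⌋ := rfl
      rw [hx₁, hx₀]
      rw [hx₀] at h₀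
      simp only [cfz, cfq, cfp]
      push_cast
      field_simp
      ring
  | n + 1 => by
      have h₁ := (gaussIter_pos hα (n + 1)).ne'
      have ih := cfz_succ hα n
      rw [cfz_add_two, cfa_eq_inv_sub, ih]
      field_simp
      ring

theorem neg_one_pow_mul_cfz_pos (hα : Irrational α) : ∀ n, 0 < (-1) ^ n * cfz α n
  | 0 => by simpa [cfz_zero] using gaussIter_pos hα 0
  | n + 1 => by
      rw [cfz_succ hα, pow_succ]
      have := mul_pos (gaussIter_pos hα (n + 1)) (neg_one_pow_mul_cfz_pos hα n)
      linear_combination this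

theorem cfz_ne_zero (hα : Irrational α) (n : ℕ) : cfz α n ≠ 0 := fun h ↦
  (neg_one_pow_mul_cfz_pos hα n).ne' (by rw [h, mul_zero])

theorem cfz_pos_of_even (hα : Irrational α) {n : ℕ} (hn : Even n) : 0 < cfz α n := by
  simpa [hn.neg_one_pow] using neg_one_pow_mul_cfz_pos hα n

theorem cfz_mul_cfz_succ_neg (hα : Irrational α) (n : ℕ) : cfz α n * cfz α (n + 1) < 0 := by
  rw [cfz_succ hα]
  nlinarith [gaussIter_pos hα (n + 1), mul_self_pos.2 (cfz_ne_zero hα n)]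

theorem abs_cfz_succ_lt (hα : Irrational α) (n : ℕ) : |cfz α (n + 1)| < |cfz α n| := by
  rw [cfz_succ hα, abs_mul, abs_neg, abs_of_pos (gaussIter_pos hα _)]
  exact mul_lt_of_lt_one_left (abs_pos.2 (cfz_ne_zero hα n)) (gaussIter_lt_one _)

end ContinuedFraction

theorem exists_sub_intCast_mem_of_coe_mem_arc {y c d : ℝ}
    (h : (y : AddCircle (1 : ℝ)) ∈ arc c d) : ∃ k : ℤ, y - k ∈ Set.Ico c d := by
  obtain ⟨t, ht, hty : (t : AddCircle (1 : ℝ)) = y⟩ := h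
  obtain ⟨k, hk⟩ := (AddCircle.coe_eq_zero_iff (1 : ℝ)).1
    (by rw [AddCircle.coe_sub, hty, sub_self] : ((y - t : ℝ) : AddCircle (1 : ℝ)) = 0)
  rw [zsmul_one] at hk
  exact ⟨k, by rwa [hk, sub_sub_cancel]⟩

theorem coe_add_cfq_mul (α x : ℝ) (n : ℕ) :
    ((x + cfq α n * α : ℝ) : AddCircle (1 : ℝ)) = ((x + cfz α n : ℝ) : AddCircle (1 : ℝ)) := by
  rw [cfz, ← add_sub_assoc, AddCircle.coe_sub,
    (AddCircle.coe_eq_zero_iff (1 : ℝ)).2 ⟨cfp α n, zsmul_one _⟩, sub_zero]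

theorem eq_cfq_of_coe_add_mul_mem_arc {α : ℝ} (hα : Irrational α) {n j : ℕ} {x : ℝ}
    (hx₀ : 0 ≤ x) (hx₁ : x < |cfz α n| + |cfz α (n + 1)|) (hj₀ : 0 < j) (hj : j < cfq α (n + 1))
    (h : ((x + j * α : ℝ) : AddCircle (1 : ℝ)) ∈ arc 0 (|cfz α n| + |cfz α (n + 1)|)) :
    j = cfq α n ∧ x + cfz α n < |cfz α n| + |cfz α (n + 1)| := by
  obtain ⟨k, hk₀, hkL⟩ := exists_sub_intCast_mem_of_coe_mem_arc h
  have hdet : (cfp α (n + 1) * cfq α n - cfp α n * cfq α (n + 1)) ^ 2 = 1 := by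
    rw [cfp_mul_cfq_sub, ← pow_mul, pow_mul', neg_one_sq, one_pow]
  have hk : |j * α - k| < |cfz α n| + |cfz α (n + 1)| :=
    abs_sub_lt_iff.2 ⟨by linarith, by linarith⟩
  obtain ⟨rfl, rfl⟩ := eq_of_abs_mul_sub_lt_of_unimodular hdet (cfz_mul_cfz_succ_neg hα n)
    (abs_cfz_succ_lt hα n) hj₀ hj hk
  refine ⟨rfl, ?_⟩
  rwa [cfz, ← add_sub_assoc]

/-- First forward return times to `I_n = [0, |z_n| + |z_{n+1}|)` for even `n`:
the return time is `q_n` on `I_n⁰ = [0, |z_{n+1}|)` and `q_{n+1}` on `I_n \ I_n⁰`. -/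
theorem statement12 (α : ℝ) (hα : Irrational α) (n : ℕ) (hn : Even n)
    (x : ℝ) (hx0 : 0 ≤ x) (hx1 : x < |cfz α n| + |cfz α (n + 1)|) :
    (x < |cfz α (n + 1)| →
      IsLeast {j : ℕ | 0 < j ∧
        ((x + (j : ℝ) * α : ℝ) : AddCircle (1 : ℝ)) ∈ arc 0 (|cfz α n| + |cfz α (n + 1)|)}
        (cfq α n)) ∧
    (|cfz α (n + 1)| ≤ x →
      IsLeast {j : ℕ | 0 < j ∧
        ((x + (j : ℝ) * α : ℝ) : AddCircle (1 : ℝ)) ∈ arc 0 (|cfz α n| + |cfz α (n + 1)|)}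
        (cfq α (n + 1))) := by
  have hz₀ : 0 < cfz α n := cfz_pos_of_even hα hn
  have hz₁ : cfz α (n + 1) < 0 := neg_of_mul_neg_right (cfz_mul_cfz_succ_neg hα n) hz₀.le
  have ha₀ := abs_of_pos hz₀
  have ha₁ := abs_of_neg hz₁
  refine ⟨fun hx ↦ ⟨⟨cfq_pos hα n, ?_⟩, ?_⟩, fun hx ↦ ⟨⟨cfq_pos hα (n + 1), ?_⟩, ?_⟩⟩
  · rw [coe_add_cfq_mul]
    exact Set.mem_image_of_mem _ ⟨by linarith, by linarith⟩
  · rintro j ⟨hj₀, hj⟩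
    by_contra! hlt
    exact hlt.ne (eq_cfq_of_coe_add_mul_mem_arc hα hx0 hx1 hj₀
      (hlt.trans_le (cfq_le_cfq_succ hα n)) hj).1
  · rw [coe_add_cfq_mul]
    exact Set.mem_image_of_mem _ ⟨by linarith, by linarith⟩
  · rintro j ⟨hj₀, hj⟩
    by_contra! hlt
    have hj' := eq_cfq_of_coe_add_mul_mem_arc hα hx0 hx1 hj₀ hlt hj
    linarith
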